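/- arXiv:1007.3397 — 3 statements merged into one kernel-verified Lean document; each statement's English description precedes it below -/
import Mathlib

section
/- For the Egorov metric g_f on ℝ^{n+2}, the Ricci tensor satisfies Ric(∂_u, ∂_u) = (n/(4f²))((f')² − 2 f f'') and Ric vanishes on all other pairs of coordinate vector fields, i.e. on all pairs not both equal to ∂_u. -/
noncomputable section

/-- A point of `ℝ^{n+2}`, written `(u, v, x)`. -/
abbrev Pt (n : ℕ) : Type := ℝ × ℝ × (Fin n → ℝ)

/-- The `k`-th coordinate direction in `ℝ^{n+2}` (`k = 0` is `∂_u`, `k = 1` is `∂_v`,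
`k = i + 2` is `∂_{x_i}`). -/
def cdir (n : ℕ) (k : Fin (n + 2)) : Pt n :=
  if (k : ℕ) = 0 then (1, 0, 0)
  else if (k : ℕ) = 1 then (0, 1, 0)
  else (0, 0, fun i => if (i : ℕ) + 2 = (k : ℕ) then 1 else 0)

/-- Partial derivative along the `k`-th coordinate direction. -/
def pd {n : ℕ} (k : Fin (n + 2)) (F : Pt n → ℝ) (p : Pt n) : ℝ :=
  fderiv ℝ F p (cdir n k)

/-- The `x`-coordinate of `p` associated to an index `k` with `2 ≤ k`. -/
def xc {n : ℕ} (p : Pt n) (k : Fin (n + 2)) : ℝ :=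
  if h : 2 ≤ (k : ℕ) then p.2.2 ⟨(k : ℕ) - 2, by have := k.isLt; omega⟩ else 0

/-- The Egorov metric `g_f = du dv + f(u) Σᵢ (dxᵢ)²` on `ℝ^{n+2}`. -/
def gE {n : ℕ} (f : ℝ → ℝ) (p : Pt n) (k l : Fin (n + 2)) : ℝ :=
  if ((k : ℕ) = 0 ∧ (l : ℕ) = 1) ∨ ((k : ℕ) = 1 ∧ (l : ℕ) = 0) then 1
  else if k = l ∧ 2 ≤ (k : ℕ) then f p.1 else 0

/-- The inverse of the Egorov metric. -/
def gEinv {n : ℕ} (f : ℝ → ℝ) (p : Pt n) (k l : Fin (n + 2)) : ℝ :=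
  if ((k : ℕ) = 0 ∧ (l : ℕ) = 1) ∨ ((k : ℕ) = 1 ∧ (l : ℕ) = 0) then 1
  else if k = l ∧ 2 ≤ (k : ℕ) then 1 / f p.1 else 0

/-- Christoffel symbols `Γ^k_{ij}` of the Levi-Civita connection of `g_f`. -/
def ΓE {n : ℕ} (f : ℝ → ℝ) (p : Pt n) (k i j : Fin (n + 2)) : ℝ :=
  (1 / 2) * ∑ l, gEinv f p k l *
    (pd i (fun q => gE f q l j) p + pd j (fun q => gE f q l i) p
      - pd l (fun q => gE f q i j) p)

/-- Component `l` of `R(∂_i, ∂_j) ∂_k`, where `R(X,Y) = ∇_{[X,Y]} - [∇_X, ∇_Y]`. -/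
def RE {n : ℕ} (f : ℝ → ℝ) (p : Pt n) (l i j k : Fin (n + 2)) : ℝ :=
  -(pd i (fun q => ΓE f q l j k) p - pd j (fun q => ΓE f q l i k) p
    + ∑ m, (ΓE f p l i m * ΓE f p m j k - ΓE f p l j m * ΓE f p m i k))

/-- Ricci tensor of `g_f`: `Ric(X,Y) = trace (Z ↦ R(X,Z)Y)`. -/
def RicE {n : ℕ} (f : ℝ → ℝ) (p : Pt n) (i j : Fin (n + 2)) : ℝ :=
  ∑ k, RE f p k i k j

/-- The function `Ric_uu = (n/(4f²)) ((f')² - 2 f f'')`. -/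
def RicuuE (n : ℕ) (f : ℝ → ℝ) (u : ℝ) : ℝ :=
  ((n : ℝ) / (4 * f u ^ 2)) * ((deriv f u) ^ 2 - 2 * f u * deriv (deriv f) u)

/-- Lie derivative of `g_f` along a vector field with components `X`. -/
def lieE {n : ℕ} (f : ℝ → ℝ) (X : Pt n → Fin (n + 2) → ℝ) (p : Pt n)
    (i j : Fin (n + 2)) : ℝ :=
  ∑ k, (X p k * pd k (fun q => gE f q i j) p
    + gE f p k j * pd i (fun q => X q k) p
    + gE f p i k * pd j (fun q => X q k) p)

/-- Hessian `Hess_h(∂_i, ∂_j)` with respect to the Levi-Civita connection of `g_f`. -/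
def hessE {n : ℕ} (f : ℝ → ℝ) (h : Pt n → ℝ) (p : Pt n) (i j : Fin (n + 2)) : ℝ :=
  pd i (fun q => pd j h q) p - ∑ k, ΓE f p k i j * pd k h p

/-- Components of the gradient of `h` with respect to `g_f`. -/
def gradE {n : ℕ} (f : ℝ → ℝ) (h : Pt n → ℝ) (p : Pt n) (k : Fin (n + 2)) : ℝ :=
  ∑ l, gEinv f p k l * pd l h p

/-- Component `k` of the covariant derivative `∇_{∂_i} X` for `g_f`. -/
def covE {n : ℕ} (f : ℝ → ℝ) (X : Pt n → Fin (n + 2) → ℝ) (p : Pt n)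
    (i k : Fin (n + 2)) : ℝ :=
  pd i (fun q => X q k) p + ∑ j, ΓE f p k i j * X p j

/-- The Ricci operator of `g_f`, `g(QX, Y) = Ric(X, Y)`. -/
def QE {n : ℕ} (f : ℝ → ℝ) (p : Pt n) (k i : Fin (n + 2)) : ℝ :=
  ∑ j, gEinv f p k j * RicE f p j i



namespace EgorovAux

/-- closed form of the Christoffel symbols -/
def Γc {n : ℕ} (f : ℝ → ℝ) (u : ℝ) (k i j : Fin (n + 2)) : ℝ :=
  if (k : ℕ) = 1 ∧ (i : ℕ) = (j : ℕ) ∧ 2 ≤ (i : ℕ) then -(deriv f u) / 2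
  else if 2 ≤ (k : ℕ) ∧ (((i : ℕ) = (k : ℕ) ∧ (j : ℕ) = 0) ∨ ((j : ℕ) = (k : ℕ) ∧ (i : ℕ) = 0))
    then deriv f u / (2 * f u) else 0

/-- derivative of f'/(2f) -/
def D2 (f : ℝ → ℝ) (u : ℝ) : ℝ := deriv (fun v => deriv f v / (2 * f v)) u

lemma cdir_fst {n : ℕ} (k : Fin (n + 2)) : (cdir n k).1 = if (k : ℕ) = 0 then 1 else 0 := by
  unfold cdir; split_ifs <;> simp_all

lemma pd_const {n : ℕ} (k : Fin (n + 2)) (c : ℝ) (p : Pt n) : pd k (fun _ => c) p = 0 := by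
  simp [pd]

lemma pd_comp_fst {n : ℕ} (g : ℝ → ℝ) (p : Pt n) (hg : DifferentiableAt ℝ g p.1)
    (k : Fin (n + 2)) :
    pd k (fun q => g q.1) p = if (k : ℕ) = 0 then deriv g p.1 else 0 := by
  have h1 : HasFDerivAt (fun q : Pt n => q.1)
      (ContinuousLinearMap.fst ℝ ℝ (ℝ × (Fin n → ℝ))) p := hasFDerivAt_fst
  have h2 : HasFDerivAt (fun q : Pt n => g q.1)
      ((ContinuousLinearMap.smulRight (1 : ℝ →L[ℝ] ℝ) (deriv g p.1)).comp
        (ContinuousLinearMap.fst ℝ ℝ (ℝ × (Fin n → ℝ)))) p :=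
    (hg.hasDerivAt.hasFDerivAt).comp p h1
  rw [pd, h2.fderiv]
  simp only [ContinuousLinearMap.coe_comp', Function.comp_apply,
    ContinuousLinearMap.coe_fst', ContinuousLinearMap.smulRight_apply,
    ContinuousLinearMap.one_apply, cdir_fst, smul_eq_mul]
  split_ifs <;> simp

variable {n : ℕ} {f : ℝ → ℝ}

lemma pd_gE (hdf : Differentiable ℝ f) (p : Pt n) (k i j : Fin (n + 2)) :
    pd k (fun q => gE f q i j) p =
      if (k : ℕ) = 0 ∧ (i : ℕ) = (j : ℕ) ∧ 2 ≤ (i : ℕ) then deriv f p.1 else 0 := by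
  by_cases h1 : ((i : ℕ) = 0 ∧ (j : ℕ) = 1) ∨ ((i : ℕ) = 1 ∧ (j : ℕ) = 0)
  · have e : (fun q : Pt n => gE f q i j) = fun _ => 1 := by
      funext q; rw [gE, if_pos h1]
    rw [e, pd_const, if_neg]; omega
  · by_cases h2 : i = j ∧ 2 ≤ (i : ℕ)
    · have e : (fun q : Pt n => gE f q i j) = fun q => f q.1 := by
        funext q; rw [gE, if_neg h1, if_pos h2]
      rw [e, pd_comp_fst f p (hdf p.1)]
      have : (i : ℕ) = (j : ℕ) := by rw [h2.1]
      split_ifs <;> simp_all <;> omega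
    · have e : (fun q : Pt n => gE f q i j) = fun _ => 0 := by
        funext q; rw [gE, if_neg h1, if_neg h2]
      rw [e, pd_const, if_neg]
      rw [Fin.ext_iff] at h2; omega

lemma sum_gEinv (p : Pt n) (k : Fin (n + 2)) (A : Fin (n + 2) → ℝ) :
    ∑ l, gEinv f p k l * A l =
      if (k : ℕ) = 0 then A ⟨1, by omega⟩
      else if (k : ℕ) = 1 then A ⟨0, by omega⟩
      else (1 / f p.1) * A k := by
  by_cases hk0 : (k : ℕ) = 0
  · rw [if_pos hk0, Finset.sum_eq_single (⟨1, by omega⟩ : Fin (n + 2))]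
    · have h : gEinv f p k ⟨1, by omega⟩ = 1 := by
        rw [gEinv, if_pos]; left; exact ⟨hk0, rfl⟩
      rw [h, one_mul]
    · intro b _ hb
      have hb1 : (b : ℕ) ≠ 1 := by
        intro h; exact hb (Fin.ext (by simpa using h))
      have h : gEinv f p k b = 0 := by
        rw [gEinv, if_neg (by omega), if_neg (fun h => by have := h.2; omega)]
      rw [h, zero_mul]
    · intro h; exact absurd (Finset.mem_univ _) h
  · by_cases hk1 : (k : ℕ) = 1
    · rw [if_neg hk0, if_pos hk1, Finset.sum_eq_single (⟨0, by omega⟩ : Fin (n + 2))]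
      · have h : gEinv f p k ⟨0, by omega⟩ = 1 := by
          rw [gEinv, if_pos]; right; exact ⟨hk1, rfl⟩
        rw [h, one_mul]
      · intro b _ hb
        have hb1 : (b : ℕ) ≠ 0 := by
          intro h; exact hb (Fin.ext (by simpa using h))
        have h : gEinv f p k b = 0 := by
          rw [gEinv, if_neg (by omega), if_neg (fun h => by have := h.2; omega)]
        rw [h, zero_mul]
      · intro h; exact absurd (Finset.mem_univ _) h
    · rw [if_neg hk0, if_neg hk1, Finset.sum_eq_single k]
      · have h : gEinv f p k k = 1 / f p.1 := by
          rw [gEinv, if_neg (by omega), if_pos ⟨rfl, by omega⟩]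
        rw [h]
      · intro b _ hb
        have h : gEinv f p k b = 0 := by
          rw [gEinv, if_neg (by omega), if_neg (fun h => hb h.1.symm)]
        rw [h, zero_mul]
      · intro h; exact absurd (Finset.mem_univ _) h

lemma ΓE_eq (hf : ContDiff ℝ (⊤ : ℕ∞) f) (hpos : ∀ u, 0 < f u) (p : Pt n) (k i j : Fin (n + 2)) :
    ΓE f p k i j = Γc f p.1 k i j := by
  have hdf : Differentiable ℝ f := hf.differentiable (by simp)
  have hne : f p.1 ≠ 0 := (hpos p.1).ne'
  rw [ΓE]
  simp only [pd_gE hdf]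
  rw [sum_gEinv, Γc]
  dsimp only
  split_ifs <;> first | ring1 | (exfalso; omega) | (exfalso; simp_all) | (field_simp; ring1) | (field_simp; ring_nf)

lemma pd_Γc (hf : ContDiff ℝ (⊤ : ℕ∞) f) (hpos : ∀ u, 0 < f u) (p : Pt n)
    (i a b c : Fin (n + 2)) :
    pd i (fun q => Γc f q.1 a b c) p =
      if (i : ℕ) = 0 then
        (if (a : ℕ) = 1 ∧ (b : ℕ) = (c : ℕ) ∧ 2 ≤ (b : ℕ) then -(deriv (deriv f) p.1) / 2
         else if 2 ≤ (a : ℕ) ∧ (((b : ℕ) = (a : ℕ) ∧ (c : ℕ) = 0) ∨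
            ((c : ℕ) = (a : ℕ) ∧ (b : ℕ) = 0)) then D2 f p.1
         else 0)
      else 0 := by
  have hdf : Differentiable ℝ f := hf.differentiable (by simp)
  have hdf' : Differentiable ℝ (deriv f) := by
    have h : ContDiff ℝ (↑(⊤ : ℕ∞)) f := hf.of_le (by simp)
    exact (h.iterate_deriv 1).differentiable (by simp)
  by_cases h1 : (a : ℕ) = 1 ∧ (b : ℕ) = (c : ℕ) ∧ 2 ≤ (b : ℕ)
  · have key : pd i (fun q : Pt n => Γc f q.1 a b c) p =
        if (i : ℕ) = 0 then deriv (fun u => -(deriv f u) / 2) p.1 else 0 := by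
      have e : (fun q : Pt n => Γc f q.1 a b c) = fun q => -(deriv f q.1) / 2 := by
        funext q; rw [Γc, if_pos h1]
      rw [e]
      exact pd_comp_fst _ p (((hdf' p.1).neg).div_const 2) i
    rw [key]
    have hd : deriv (fun u => -(deriv f u) / 2) p.1 = -(deriv (deriv f) p.1) / 2 := by
      rw [deriv_div_const, deriv.fun_neg]
    rw [hd]
    by_cases hi : (i : ℕ) = 0
    · rw [if_pos hi, if_pos hi, if_pos h1]
    · rw [if_neg hi, if_neg hi]
  · by_cases h2 : 2 ≤ (a : ℕ) ∧ (((b : ℕ) = (a : ℕ) ∧ (c : ℕ) = 0) ∨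
        ((c : ℕ) = (a : ℕ) ∧ (b : ℕ) = 0))
    · have key : pd i (fun q : Pt n => Γc f q.1 a b c) p =
          if (i : ℕ) = 0 then deriv (fun u => deriv f u / (2 * f u)) p.1 else 0 := by
        have e : (fun q : Pt n => Γc f q.1 a b c) = fun q => deriv f q.1 / (2 * f q.1) := by
          funext q; rw [Γc, if_neg h1, if_pos h2]
        rw [e]
        exact pd_comp_fst _ p ((hdf' p.1).div ((hdf p.1).const_mul 2)
          (mul_pos two_pos (hpos p.1)).ne') i
      rw [key]
      by_cases hi : (i : ℕ) = 0
      · rw [if_pos hi, if_pos hi, if_neg h1, if_pos h2]; rfl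
      · rw [if_neg hi, if_neg hi]
    · have e : (fun q : Pt n => Γc f q.1 a b c) = fun _ => 0 := by
        funext q; rw [Γc, if_neg h1, if_neg h2]
      rw [e, pd_const]
      by_cases hi : (i : ℕ) = 0
      · rw [if_pos hi, if_neg h1, if_neg h2]
      · rw [if_neg hi]

set_option maxHeartbeats 2000000 in
lemma RE_diag (hf : ContDiff ℝ (⊤ : ℕ∞) f) (hpos : ∀ u, 0 < f u) (p : Pt n) (k i j : Fin (n + 2)) :
    RE f p k i k j =
      if (i : ℕ) = 0 ∧ (j : ℕ) = 0 ∧ 2 ≤ (k : ℕ) then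
        -(D2 f p.1 + (deriv f p.1 / (2 * f p.1)) ^ 2) else 0 := by
  rw [RE]
  have e1 : (fun q => ΓE f q k k j) = fun q => Γc f q.1 k k j :=
    funext fun q => ΓE_eq hf hpos q k k j
  have e2 : (fun q => ΓE f q k i j) = fun q => Γc f q.1 k i j :=
    funext fun q => ΓE_eq hf hpos q k i j
  rw [e1, e2, pd_Γc hf hpos p i k k j, pd_Γc hf hpos p k k i j]
  have hsum : ∑ m, (ΓE f p k i m * ΓE f p m k j - ΓE f p k k m * ΓE f p m i j)
      = if (i : ℕ) = 0 ∧ (j : ℕ) = 0 ∧ 2 ≤ (k : ℕ)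
        then (deriv f p.1 / (2 * f p.1)) ^ 2 else 0 := by
    have hterm : ∀ m : Fin (n + 2),
        ΓE f p k i m * ΓE f p m k j - ΓE f p k k m * ΓE f p m i j
          = if m = k ∧ (i : ℕ) = 0 ∧ (j : ℕ) = 0 ∧ 2 ≤ (k : ℕ)
            then (deriv f p.1 / (2 * f p.1)) ^ 2 else 0 := by
      intro m
      simp only [ΓE_eq hf hpos, Γc, Fin.ext_iff]
      split_ifs <;> first | ring1 | (exfalso; omega)
    rw [Finset.sum_congr rfl (fun m _ => hterm m)]
    by_cases hC : (i : ℕ) = 0 ∧ (j : ℕ) = 0 ∧ 2 ≤ (k : ℕ)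
    · simp [hC]
    · rw [if_neg hC]
      exact Finset.sum_eq_zero fun m _ => if_neg (fun h => hC h.2)
  rw [hsum]
  split_ifs <;> first | ring1 | (exfalso; omega)
end EgorovAux

/-- the Ricci tensor of the Egorov metric satisfies
`Ric(∂_u, ∂_u) = (n/(4f²))((f')² - 2 f f'')`, all other components being zero. -/
theorem egorov_ricci {n : ℕ} (f : ℝ → ℝ) (hf : ContDiff ℝ (⊤ : ℕ∞) f)
    (hpos : ∀ u, 0 < f u) :
    ∀ (p : Pt n) (i j : Fin (n + 2)),
      RicE f p i j = if (i : ℕ) = 0 ∧ (j : ℕ) = 0 then RicuuE n f p.1 else 0 := by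
  intro p i j
  have hdf : Differentiable ℝ f := hf.differentiable (by simp)
  have hdf' : Differentiable ℝ (deriv f) := by
    have h : ContDiff ℝ (↑(⊤ : ℕ∞)) f := hf.of_le (by simp)
    exact (h.iterate_deriv 1).differentiable (by simp)
  have hne : f p.1 ≠ 0 := (hpos p.1).ne'
  rw [RicE, Finset.sum_congr rfl (fun k _ => EgorovAux.RE_diag hf hpos p k i j)]
  by_cases hC : (i : ℕ) = 0 ∧ (j : ℕ) = 0
  · rw [if_pos hC]
    set c : ℝ := -(EgorovAux.D2 f p.1 + (deriv f p.1 / (2 * f p.1)) ^ 2) with hc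
    have hs : ∑ k : Fin (n + 2),
        (if (i : ℕ) = 0 ∧ (j : ℕ) = 0 ∧ 2 ≤ (k : ℕ) then c else 0) = n * c := by
      rw [Fin.sum_univ_succ, Fin.sum_univ_succ]
      simp [hC.1, hC.2, Fin.val_succ, mul_comm]
    rw [hs]
    have hD2 : EgorovAux.D2 f p.1 =
        (deriv (deriv f) p.1 * (2 * f p.1) - deriv f p.1 * (2 * deriv f p.1)) /
          (2 * f p.1) ^ 2 := by
      rw [EgorovAux.D2, deriv_fun_div (hdf' p.1) ((hdf p.1).const_mul 2)
        (mul_pos two_pos (hpos p.1)).ne']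
      rw [deriv_const_mul 2 (hdf p.1)]
    rw [hc, hD2, RicuuE]
    field_simp
    ring
  · rw [if_neg hC]
    exact Finset.sum_eq_zero fun k _ => by
      rw [if_neg (fun h => hC ⟨h.1, h.2.1⟩)]
end
end

section
/- The Ricci operator of an Egorov space (ℝ^{n+2}, g_f) is two-step nilpotent: the (1,1)-tensor Q defined by g_f(QX, Y) = Ric(X,Y) satisfies Q² = 0. In particular the scalar curvature of g_f vanishes identically. -/
noncomputable section

lemma cdir_fst {n : ℕ} (k : Fin (n+2)) : (cdir n k).1 = if (k:ℕ) = 0 then 1 else 0 := by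
  unfold cdir; split_ifs <;> rfl
lemma pd_const {n : ℕ} (k : Fin (n+2)) (c : ℝ) (p : Pt n) : pd k (fun _ => c) p = 0 := by
  simp [pd]
lemma pd_comp_fst {n : ℕ} (h : ℝ → ℝ) (p : Pt n) (hd : DifferentiableAt ℝ h p.1) (k : Fin (n+2)) :
    pd k (fun q : Pt n => h q.1) p = if (k:ℕ)=0 then deriv h p.1 else 0 := by
  have H : HasFDerivAt (fun q : Pt n => h q.1)
      ((deriv h p.1) • (ContinuousLinearMap.fst ℝ ℝ (ℝ × (Fin n → ℝ)))) p :=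
    (hd.hasDerivAt).comp_hasFDerivAt p hasFDerivAt_fst
  rw [pd, H.fderiv]
  simp [cdir_fst, mul_ite]
lemma sum_eq_at {n : ℕ} (F : Fin (n+2) → ℝ) (l0 : Fin (n+2)) (h : ∀ l, l ≠ l0 → F l = 0) :
    ∑ l, F l = F l0 :=
  Finset.sum_eq_single_of_mem l0 (Finset.mem_univ _) (fun l _ hl => h l hl)

variable {n : ℕ}

lemma pd_gE (f : ℝ → ℝ) (hf : Differentiable ℝ f) (p : Pt n) (k i j : Fin (n+2)) :
    pd k (fun q => gE f q i j) p
      = if (k:ℕ)=0 ∧ (i:ℕ)=(j:ℕ) ∧ 2 ≤ (i:ℕ) then deriv f p.1 else 0 := by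
  by_cases h1 : ((i:ℕ)=0 ∧ (j:ℕ)=1) ∨ ((i:ℕ)=1 ∧ (j:ℕ)=0)
  · have : (fun q : Pt n => gE f q i j) = fun _ => (1:ℝ) := by
      funext q; simp only [gE]; rw [if_pos h1]
    rw [this, pd_const]
    split_ifs with h2
    · omega
    · rfl
  · by_cases h2 : i = j ∧ 2 ≤ (i:ℕ)
    · have : (fun q : Pt n => gE f q i j) = fun q => f q.1 := by
        funext q; simp only [gE]; rw [if_neg h1, if_pos h2]
      rw [this, pd_comp_fst f p (hf p.1)]
      have h2i := h2.2
      have h2j : (i:ℕ) = (j:ℕ) := by rw [h2.1]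
      split_ifs <;> first | rfl | omega
    · have : (fun q : Pt n => gE f q i j) = fun _ => (0:ℝ) := by
        funext q; simp only [gE]; rw [if_neg h1, if_neg h2]
      rw [this, pd_const]
      have : ¬((k:ℕ)=0 ∧ (i:ℕ)=(j:ℕ) ∧ 2 ≤ (i:ℕ)) := by
        intro ⟨_, hij, h2i⟩; exact h2 ⟨Fin.ext hij, h2i⟩
      rw [if_neg this]

lemma sum_gEinv_mul (f : ℝ → ℝ) (p : Pt n) (k : Fin (n+2)) (X : Fin (n+2) → ℝ) :
    ∑ l, gEinv f p k l * X l
      = if (k:ℕ)=0 then X 1 else if (k:ℕ)=1 then X 0 else (1 / f p.1) * X k := by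
  split_ifs with h0 h1
  · rw [sum_eq_at _ 1]
    · have : gEinv f p k 1 = 1 := by simp [gEinv, h0]
      rw [this, one_mul]
    · intro l hl
      have : gEinv f p k l = 0 := by
        have hlv : (l:ℕ) ≠ 1 := fun h => hl (Fin.ext (by simp [h]))
        simp only [gEinv]
        split_ifs with c1 c2 <;> first | rfl | omega
      rw [this, zero_mul]
  · rw [sum_eq_at _ 0]
    · have : gEinv f p k 0 = 1 := by simp [gEinv, h1]
      rw [this, one_mul]
    · intro l hl
      have hlv : (l:ℕ) ≠ 0 := fun h => hl (Fin.ext (by simp [h]))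
      have : gEinv f p k l = 0 := by
        simp only [gEinv]
        split_ifs with c1 c2 <;> first | rfl | omega
      rw [this, zero_mul]
  · rw [sum_eq_at _ k]
    · have : gEinv f p k k = 1 / f p.1 := by
        simp only [gEinv]
        rw [if_neg (by omega), if_pos ⟨by trivial, by omega⟩]
      rw [this]
    · intro l hl
      have hlv : (l:ℕ) ≠ (k:ℕ) := fun h => hl (Fin.ext (by omega))
      have : gEinv f p k l = 0 := by
        simp only [gEinv]
        rw [if_neg (by omega), if_neg (by rintro ⟨rfl, -⟩; exact hlv rfl)]
      rw [this, zero_mul]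

/-- Closed form of the Christoffel symbols. -/
def Γc {n : ℕ} (f : ℝ → ℝ) (u : ℝ) (k i j : Fin (n+2)) : ℝ :=
  if (k:ℕ)=1 ∧ (i:ℕ)=(j:ℕ) ∧ 2 ≤ (i:ℕ) then -(deriv f u)/2
  else if 2 ≤ (k:ℕ) ∧ (k:ℕ)=(i:ℕ) ∧ (j:ℕ)=0 then deriv f u / (2 * f u)
  else if 2 ≤ (k:ℕ) ∧ (k:ℕ)=(j:ℕ) ∧ (i:ℕ)=0 then deriv f u / (2 * f u)
  else 0

lemma ΓE_eq (f : ℝ → ℝ) (hf : Differentiable ℝ f) (p : Pt n) (k i j : Fin (n+2)) :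
    ΓE f p k i j = Γc f p.1 k i j := by
  unfold ΓE
  simp only [pd_gE f hf p]
  rw [sum_gEinv_mul]
  unfold Γc
  simp only [Fin.val_zero, Fin.val_one, true_and, false_and, and_true, and_false, if_true, if_false]
  simp only [show ¬ (2:ℕ) ≤ 1 by omega, show ¬ (2:ℕ) ≤ 0 by omega, and_false, false_and, if_false]
  split_ifs <;>
    (try simp only [true_and, false_and, and_true, and_false] at *) <;>
    first | rfl | omega | ring

lemma sum_Γc_mul (f : ℝ → ℝ) (u : ℝ) (k i : Fin (n+2)) (X : Fin (n+2) → ℝ) :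
    ∑ m, Γc f u k i m * X m =
      if (k:ℕ)=1 ∧ 2 ≤ (i:ℕ) then (-(deriv f u)/2) * X i
      else if 2 ≤ (k:ℕ) ∧ (k:ℕ)=(i:ℕ) then (deriv f u/(2*f u)) * X 0
      else if 2 ≤ (k:ℕ) ∧ (i:ℕ)=0 then (deriv f u/(2*f u)) * X k
      else 0 := by
  split_ifs with h1 h2 h3
  · rw [sum_eq_at _ i]
    · congr 1
      unfold Γc; rw [if_pos ⟨h1.1, rfl, h1.2⟩]
    · intro l hl
      have hv : (i:ℕ) ≠ (l:ℕ) := fun h => hl (Fin.ext h.symm)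
      unfold Γc
      rw [if_neg (by omega), if_neg (by omega), if_neg (by omega), zero_mul]
  · rw [sum_eq_at _ 0]
    · congr 1
      unfold Γc
      rw [if_neg (by omega), if_pos ⟨h2.1, h2.2, by simp⟩]
    · intro l hl
      have hv : (l:ℕ) ≠ 0 := fun h => hl (Fin.ext (by simpa using h))
      unfold Γc
      rw [if_neg (by omega), if_neg (by omega), if_neg (by omega), zero_mul]
  · rw [sum_eq_at _ k]
    · congr 1
      unfold Γc
      rw [if_neg (by omega), if_neg (by omega), if_pos ⟨h3.1, rfl, h3.2⟩]
    · intro l hl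
      have hv : (l:ℕ) ≠ (k:ℕ) := fun h => hl (Fin.ext h)
      unfold Γc
      rw [if_neg (by omega), if_neg (by omega), if_neg (by omega), zero_mul]
  · apply Finset.sum_eq_zero
    intro m _
    unfold Γc
    rw [if_neg (by omega), if_neg (by omega), if_neg (by omega), zero_mul]

/-- derivative of `f'/(2f)` -/
def Bd (f : ℝ → ℝ) (u : ℝ) : ℝ :=
  (deriv (deriv f) u * (2 * f u) - deriv f u * (2 * deriv f u)) / (2 * f u)^2

/-- Closed form of the `u`-derivative of the Christoffel symbols. -/
def Γc' {n : ℕ} (f : ℝ → ℝ) (u : ℝ) (k i j : Fin (n+2)) : ℝ :=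
  if (k:ℕ)=1 ∧ (i:ℕ)=(j:ℕ) ∧ 2 ≤ (i:ℕ) then -(deriv (deriv f) u)/2
  else if 2 ≤ (k:ℕ) ∧ (k:ℕ)=(i:ℕ) ∧ (j:ℕ)=0 then Bd f u
  else if 2 ≤ (k:ℕ) ∧ (k:ℕ)=(j:ℕ) ∧ (i:ℕ)=0 then Bd f u
  else 0

lemma pd_ΓE (f : ℝ → ℝ) (hf : ContDiff ℝ (⊤ : ℕ∞) f) (hpos : ∀ u, 0 < f u) (p : Pt n)
    (a k i j : Fin (n+2)) :
    pd a (fun q => ΓE f q k i j) p = if (a:ℕ)=0 then Γc' f p.1 k i j else 0 := by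
  have hfd : Differentiable ℝ f := hf.differentiable (by simp)
  have hfd2 : Differentiable ℝ (deriv f) := by
    have := (contDiff_infty_iff_deriv.mp (hf.of_le (by simp))).2
    exact this.differentiable (by simp)
  have hne : (2 : ℝ) * f p.1 ≠ 0 := by have := hpos p.1; positivity
  have hfun : (fun q : Pt n => ΓE f q k i j) = fun q => Γc f q.1 k i j := by
    funext q; exact ΓE_eq f hfd q k i j
  rw [hfun]
  unfold Γc Γc'
  by_cases c1 : (k:ℕ)=1 ∧ (i:ℕ)=(j:ℕ) ∧ 2 ≤ (i:ℕ)
  · simp only [if_pos c1]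
    rw [pd_comp_fst (fun u => -(deriv f u)/2) p (by fun_prop)]
    congr 1
    rw [deriv_div_const, deriv.fun_neg]
  · simp only [if_neg c1]
    by_cases c2 : 2 ≤ (k:ℕ) ∧ (k:ℕ)=(i:ℕ) ∧ (j:ℕ)=0
    · simp only [if_pos c2]
      rw [pd_comp_fst (fun u => deriv f u / (2 * f u)) p
        (DifferentiableAt.div (hfd2 p.1) (((hfd p.1).const_mul 2)) hne)]
      congr 1
      rw [deriv_fun_div (hfd2 p.1) ((hfd p.1).const_mul 2) hne]
      unfold Bd
      rw [deriv_const_mul 2 (hfd p.1)]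
    · simp only [if_neg c2]
      by_cases c3 : 2 ≤ (k:ℕ) ∧ (k:ℕ)=(j:ℕ) ∧ (i:ℕ)=0
      · simp only [if_pos c3]
        rw [pd_comp_fst (fun u => deriv f u / (2 * f u)) p
          (DifferentiableAt.div (hfd2 p.1) (((hfd p.1).const_mul 2)) hne)]
        congr 1
        rw [deriv_fun_div (hfd2 p.1) ((hfd p.1).const_mul 2) hne]
        unfold Bd
        rw [deriv_const_mul 2 (hfd p.1)]
      · simp only [if_neg c3]
        rw [pd_const]
        simp

lemma Γc_zero1 (f : ℝ → ℝ) (u : ℝ) (i j : Fin (n+2)) : Γc f u (0 : Fin (n+2)) i j = 0 := by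
  have h0 : ((0 : Fin (n+2)) : ℕ) = 0 := Fin.val_zero _
  unfold Γc
  rw [if_neg (by omega), if_neg (by omega), if_neg (by omega)]

lemma RE_eq (f : ℝ → ℝ) (hf : ContDiff ℝ (⊤ : ℕ∞) f) (hpos : ∀ u, 0 < f u) (p : Pt n)
    (k i j : Fin (n+2)) :
    RE f p k i k j = if 2 ≤ (k:ℕ) ∧ (i:ℕ)=0 ∧ (j:ℕ)=0
      then -(Bd f p.1 + (deriv f p.1/(2*f p.1))^2) else 0 := by
  have hfd : Differentiable ℝ f := hf.differentiable (by simp)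
  unfold RE
  have e1 : pd i (fun q => ΓE f q k k j) p
      = if 2 ≤ (k:ℕ) ∧ (i:ℕ)=0 ∧ (j:ℕ)=0 then Bd f p.1 else 0 := by
    rw [pd_ΓE f hf hpos p i k k j]
    unfold Γc'
    split_ifs <;>
      (try simp only [true_and, false_and, and_true, and_false] at *) <;>
      first | rfl | omega
  have e2 : pd k (fun q => ΓE f q k i j) p = 0 := by
    rw [pd_ΓE f hf hpos p k k i j]
    split_ifs with h
    · unfold Γc'
      rw [if_neg (by omega), if_neg (by omega), if_neg (by omega)]
    · rfl
  have hsum : ∑ m, (ΓE f p k i m * ΓE f p m k j - ΓE f p k k m * ΓE f p m i j)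
      = (∑ m, Γc f p.1 k i m * Γc f p.1 m k j)
        - ∑ m, Γc f p.1 k k m * Γc f p.1 m i j := by
    rw [← Finset.sum_sub_distrib]
    refine Finset.sum_congr rfl fun m _ => ?_
    rw [ΓE_eq f hfd, ΓE_eq f hfd, ΓE_eq f hfd, ΓE_eq f hfd]
  have e3 : ∑ m, Γc f p.1 k i m * Γc f p.1 m k j
      = if 2 ≤ (k:ℕ) ∧ (i:ℕ)=0 ∧ (j:ℕ)=0 then (deriv f p.1/(2*f p.1))^2 else 0 := by
    rw [sum_Γc_mul]
    by_cases h1 : (k:ℕ)=1 ∧ 2 ≤ (i:ℕ)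
    · rw [if_pos h1]
      have : Γc f p.1 i k j = 0 := by
        unfold Γc
        rw [if_neg (by omega), if_neg (by omega), if_neg (by omega)]
      rw [this, mul_zero, if_neg (by omega)]
    · rw [if_neg h1]
      by_cases h2 : 2 ≤ (k:ℕ) ∧ (k:ℕ)=(i:ℕ)
      · rw [if_pos h2, Γc_zero1, mul_zero, if_neg (by omega)]
      · rw [if_neg h2]
        by_cases h3 : 2 ≤ (k:ℕ) ∧ (i:ℕ)=0
        · rw [if_pos h3]
          by_cases j0 : (j:ℕ)=0
          · have hG : Γc f p.1 k k j = deriv f p.1/(2*f p.1) := by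
              unfold Γc
              rw [if_neg (by omega), if_pos ⟨h3.1, rfl, j0⟩]
            rw [hG, if_pos ⟨h3.1, h3.2, j0⟩]
            ring
          · have hG : Γc f p.1 k k j = 0 := by
              unfold Γc
              rw [if_neg (by omega), if_neg (by omega), if_neg (by omega)]
            rw [hG, mul_zero, if_neg (by omega)]
        · rw [if_neg h3, if_neg (by omega)]
  have e4 : ∑ m, Γc f p.1 k k m * Γc f p.1 m i j = 0 := by
    rw [sum_Γc_mul]
    split_ifs with h1 h2 h3
    · exfalso; omega
    · rw [Γc_zero1, mul_zero]
    · exfalso; omega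
    · rfl
  rw [e1, e2, hsum, e3, e4]
  split_ifs <;> ring

lemma sum_ite_two_le (c : ℝ) : ∑ k : Fin (n+2), (if 2 ≤ (k:ℕ) then c else 0) = n * c := by
  rw [Fin.sum_univ_succ, Fin.sum_univ_succ]
  have h0 : ((0 : Fin (n+2)) : ℕ) = 0 := Fin.val_zero _
  rw [if_neg (by omega)]
  rw [if_neg (by simp)]
  have ht : ∀ i : Fin n, (if 2 ≤ ((i.succ.succ : Fin (n+2)) : ℕ) then c else 0) = c := by
    intro i; rw [if_pos (by simp [Fin.val_succ])]
  simp only [ht]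
  rw [Finset.sum_const, Finset.card_univ, Fintype.card_fin]
  simp [nsmul_eq_mul]

lemma RicE_eq (f : ℝ → ℝ) (hf : ContDiff ℝ (⊤ : ℕ∞) f) (hpos : ∀ u, 0 < f u) (p : Pt n)
    (i j : Fin (n+2)) :
    RicE f p i j = if (i:ℕ)=0 ∧ (j:ℕ)=0 then RicuuE n f p.1 else 0 := by
  unfold RicE
  have key : ∀ k : Fin (n+2), RE f p k i k j
      = if 2 ≤ (k:ℕ) then
          (if (i:ℕ)=0 ∧ (j:ℕ)=0 then -(Bd f p.1 + (deriv f p.1/(2*f p.1))^2) else 0)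
        else 0 := by
    intro k
    rw [RE_eq f hf hpos p k i j]
    split_ifs <;> first | rfl | omega
  simp only [key]
  rw [sum_ite_two_le]
  by_cases hij : (i:ℕ)=0 ∧ (j:ℕ)=0
  · rw [if_pos hij, if_pos hij]
    unfold RicuuE Bd
    have h1 : f p.1 ≠ 0 := ne_of_gt (hpos p.1)
    field_simp
    ring
  · rw [if_neg hij, if_neg hij, mul_zero]

lemma QE_eq (f : ℝ → ℝ) (hf : ContDiff ℝ (⊤ : ℕ∞) f) (hpos : ∀ u, 0 < f u) (p : Pt n)
    (k i : Fin (n+2)) :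
    QE f p k i = if (k:ℕ)=1 ∧ (i:ℕ)=0 then RicuuE n f p.1 else 0 := by
  unfold QE
  rw [sum_gEinv_mul]
  simp only [RicE_eq f hf hpos p]
  simp only [Fin.val_zero, Fin.val_one, true_and, false_and, and_true, and_false,
    if_true, if_false]
  split_ifs <;>
    (try simp only [true_and, false_and, and_true, and_false] at *) <;>
    first | rfl | omega | ring


/-- the Ricci operator `Q` of an Egorov space (defined by
`g_f(QX, Y) = Ric(X,Y)`) is two-step nilpotent, `Q² = 0`; in particular the scalar
curvature (the trace of `Q`) vanishes identically. -/
theorem egorov_ricci_operator_nilpotent {n : ℕ} (f : ℝ → ℝ) (hf : ContDiff ℝ (⊤ : ℕ∞) f)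
    (hpos : ∀ u, 0 < f u) :
    (∀ (p : Pt n) (k i : Fin (n + 2)), ∑ m, QE f p k m * QE f p m i = 0) ∧
    (∀ p : Pt n, ∑ k, QE f p k k = 0) := by
  constructor
  · intro p k i
    refine Finset.sum_eq_zero fun m _ => ?_
    rw [QE_eq f hf hpos p k m, QE_eq f hf hpos p m i]
    split_ifs <;> first | omega | ring
  · intro p
    refine Finset.sum_eq_zero fun k _ => ?_
    rw [QE_eq f hf hpos p k k]
    rw [if_neg (by omega)]
end
end

section
/- For any real number λ, the vector field X = (−(1/2)∫ Ric_{uu} du + λ v) ∂_v + Σᵢ₌₁ⁿ (λ/2) xᵢ ∂ᵢ on an Egorov space (ℝ^{n+2}, g_f) satisfies the Ricci soliton equation L_X g_f + Ric = λ g_f, where Ric_{uu}(u) = (n/(4 f(u)²))((f'(u))² − 2 f(u) f''(u)). Hence every Egorov space is an expanding, steady, and shrinking Ricci soliton. -/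
noncomputable section

namespace Eg

variable {n : ℕ}

lemma cdir_fst (k : Fin (n+2)) : (cdir n k).1 = if (k : ℕ) = 0 then 1 else 0 := by
  unfold cdir; split_ifs <;> rfl

lemma cdir_snd_fst (k : Fin (n+2)) : (cdir n k).2.1 = if (k : ℕ) = 1 then 1 else 0 := by
  unfold cdir; split_ifs <;> simp_all

lemma cdir_snd_snd (k : Fin (n+2)) (i : Fin n) :
    (cdir n k).2.2 i = if (i : ℕ) + 2 = (k : ℕ) then 1 else 0 := by
  unfold cdir; split_ifs with h1 h2 <;> simp_all

lemma pd_hasFDerivAt {F : Pt n → ℝ} {F' : Pt n →L[ℝ] ℝ} {p : Pt n}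
    (h : HasFDerivAt F F' p) (k : Fin (n+2)) : pd k F p = F' (cdir n k) := by
  rw [pd, h.fderiv]

lemma pd_const (k : Fin (n+2)) (c : ℝ) (p : Pt n) : pd k (fun _ => c) p = 0 := by
  rw [pd_hasFDerivAt (hasFDerivAt_const c p) k]; rfl

lemma pd_fst {h : ℝ → ℝ} {p : Pt n} (hd : DifferentiableAt ℝ h p.1) (k : Fin (n+2)) :
    pd k (fun q : Pt n => h q.1) p = if (k : ℕ) = 0 then deriv h p.1 else 0 := by
  have hh : HasFDerivAt (fun q : Pt n => h q.1)
      (deriv h p.1 • ContinuousLinearMap.fst ℝ ℝ (ℝ × (Fin n → ℝ))) p :=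
    hd.hasDerivAt.comp_hasFDerivAt p hasFDerivAt_fst
  rw [pd_hasFDerivAt hh k]
  simp [cdir_fst]

lemma pd_snd_fst (k : Fin (n+2)) (p : Pt n) :
    pd k (fun q : Pt n => q.2.1) p = if (k : ℕ) = 1 then 1 else 0 := by
  have : HasFDerivAt (fun q : Pt n => q.2.1)
      ((ContinuousLinearMap.fst ℝ ℝ (Fin n → ℝ)).comp
        (ContinuousLinearMap.snd ℝ ℝ (ℝ × (Fin n → ℝ)))) p :=
    ContinuousLinearMap.hasFDerivAt ((ContinuousLinearMap.fst ℝ ℝ (Fin n → ℝ)).comp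
        (ContinuousLinearMap.snd ℝ ℝ (ℝ × (Fin n → ℝ))))
  rw [pd_hasFDerivAt this k]
  simp [cdir_snd_fst]

lemma pd_x (k l : Fin (n+2)) (hl : 2 ≤ (l : ℕ)) (p : Pt n) :
    pd k (fun q : Pt n => xc q l) p = if k = l then 1 else 0 := by
  have hlt : (l : ℕ) - 2 < n := by have := l.isLt; omega
  have he : (fun q : Pt n => xc q l) = fun q : Pt n => q.2.2 ⟨(l : ℕ) - 2, hlt⟩ := by
    funext q; rw [xc, dif_pos hl]
  rw [he]
  have : HasFDerivAt (fun q : Pt n => q.2.2 ⟨(l : ℕ) - 2, hlt⟩)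
      ((ContinuousLinearMap.proj (⟨(l : ℕ) - 2, hlt⟩ : Fin n)).comp
        ((ContinuousLinearMap.snd ℝ ℝ (Fin n → ℝ)).comp
          (ContinuousLinearMap.snd ℝ ℝ (ℝ × (Fin n → ℝ))))) p :=
    ContinuousLinearMap.hasFDerivAt ((ContinuousLinearMap.proj (⟨(l : ℕ) - 2, hlt⟩ : Fin n)).comp
        ((ContinuousLinearMap.snd ℝ ℝ (Fin n → ℝ)).comp
          (ContinuousLinearMap.snd ℝ ℝ (ℝ × (Fin n → ℝ)))))
  rw [pd_hasFDerivAt this k]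
  simp [cdir_snd_snd, Fin.ext_iff]
  split_ifs <;> first | rfl | omega

-- STAGE 2
lemma sum_split (g : Fin (n+2) → ℝ) :
    ∑ k, g k = g 0 + g 1 + ∑ b : Fin n, g b.succ.succ := by
  rw [Fin.sum_univ_succ, Fin.sum_univ_succ]
  simp [Fin.succ_zero_eq_one, add_assoc]

lemma val_ss (b : Fin n) : ((b.succ.succ : Fin (n+2)) : ℕ) = (b : ℕ) + 2 := by
  simp [Fin.val_succ]

lemma pd_gE {f : ℝ → ℝ} (hf : Differentiable ℝ f) (m k l : Fin (n+2)) (p : Pt n) :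
    pd m (fun q => gE f q k l) p
      = if (m : ℕ) = 0 ∧ k = l ∧ 2 ≤ (k : ℕ) then deriv f p.1 else 0 := by
  by_cases h1 : ((k : ℕ) = 0 ∧ (l : ℕ) = 1) ∨ ((k : ℕ) = 1 ∧ (l : ℕ) = 0)
  · have hfun : (fun q : Pt n => gE f q k l) = fun _ => (1:ℝ) := by
      funext q; rw [gE, if_pos h1]
    rw [hfun, pd_const]
    have : ¬((m : ℕ) = 0 ∧ k = l ∧ 2 ≤ (k : ℕ)) := by
      rintro ⟨-, rfl, h2⟩; omega
    rw [if_neg this]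
  · by_cases h2 : k = l ∧ 2 ≤ (k : ℕ)
    · obtain ⟨rfl, hk2⟩ := h2
      have hfun : (fun q : Pt n => gE f q k k) = fun q => f q.1 := by
        funext q
        rw [gE, if_neg h1, if_pos ⟨rfl, hk2⟩]
      rw [hfun, pd_fst (hf.differentiableAt)]
      by_cases h3 : (m : ℕ) = 0 <;> simp [h3, hk2]
    · have hfun : (fun q : Pt n => gE f q k l) = fun _ => (0:ℝ) := by
        funext q; rw [gE, if_neg h1, if_neg h2]
      rw [hfun, pd_const]
      simp [h2]


def Γc (f : ℝ → ℝ) (u : ℝ) {n : ℕ} (k i j : Fin (n+2)) : ℝ :=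
  if (k:ℕ) = 1 ∧ (i:ℕ) = (j:ℕ) ∧ 2 ≤ (i:ℕ) then -(deriv f u)/2
  else if (((i:ℕ) = (k:ℕ) ∧ (j:ℕ) = 0) ∨ ((j:ℕ) = (k:ℕ) ∧ (i:ℕ) = 0)) ∧ 2 ≤ (k:ℕ) then
    deriv f u / (2 * f u)
  else 0

lemma sum_ite_val (c : ℝ) (k0 : Fin (n+2)) (P : Prop) [Decidable P] :
    ∑ l : Fin (n+2), (if (l:ℕ) = (k0:ℕ) ∧ P then c else 0) = if P then c else 0 := by
  by_cases hP : P
  · simp only [hP, and_true, if_pos, Fin.val_eq_val]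
    rw [Finset.sum_ite_eq' Finset.univ k0 (fun _ => c)]
    simp
  · simp [hP]

lemma ΓE_eq {f : ℝ → ℝ} (hf : Differentiable ℝ f) (p : Pt n) (k i j : Fin (n+2)) :
    ΓE f p k i j = Γc f p.1 k i j := by
  unfold ΓE
  have key : ∀ l : Fin (n+2),
      gEinv f p k l * (pd i (fun q => gE f q l j) p + pd j (fun q => gE f q l i) p
        - pd l (fun q => gE f q i j) p)
      = (if (l:ℕ) = ((0 : Fin (n+2)):ℕ) ∧ ((k:ℕ) = 1 ∧ (i:ℕ) = (j:ℕ) ∧ 2 ≤ (i:ℕ))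
          then -(deriv f p.1) else 0)
      + (if (l:ℕ) = (k:ℕ) ∧ (2 ≤ (k:ℕ) ∧ (((i:ℕ) = 0 ∧ (k:ℕ) = (j:ℕ))
            ∨ ((j:ℕ) = 0 ∧ (k:ℕ) = (i:ℕ))))
          then deriv f p.1 / f p.1 else 0) := by
    intro l
    rw [pd_gE hf, pd_gE hf, pd_gE hf]
    rw [Fin.val_zero]
    simp only [gEinv, Fin.ext_iff, Fin.val_zero]
    split_ifs <;> first | omega | ring
  rw [Finset.sum_congr rfl (fun l _ => key l), Finset.sum_add_distrib,
    sum_ite_val, sum_ite_val]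
  unfold Γc
  split_ifs <;> first | omega | ring


def Γc' (f : ℝ → ℝ) (u : ℝ) {n : ℕ} (k i j : Fin (n+2)) : ℝ :=
  if (k:ℕ) = 1 ∧ (i:ℕ) = (j:ℕ) ∧ 2 ≤ (i:ℕ) then -(deriv (deriv f) u)/2
  else if (((i:ℕ) = (k:ℕ) ∧ (j:ℕ) = 0) ∨ ((j:ℕ) = (k:ℕ) ∧ (i:ℕ) = 0)) ∧ 2 ≤ (k:ℕ) then
    deriv (deriv f) u / (2 * f u) - (deriv f u)^2 / (2 * f u ^ 2)
  else 0

lemma pd_ΓE {f : ℝ → ℝ} (hf : ContDiff ℝ (⊤ : ℕ∞) f) (hpos : ∀ u, 0 < f u)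
    (m k i j : Fin (n+2)) (p : Pt n) :
    pd m (fun q => ΓE f q k i j) p = if (m:ℕ) = 0 then Γc' f p.1 k i j else 0 := by
  have hfi : ContDiff ℝ ((⊤ : ℕ∞) : WithTop ℕ∞) f := hf.of_le (by simp)
  have hd1 : Differentiable ℝ f := (contDiff_infty_iff_deriv.mp hfi).1
  have hf' : ContDiff ℝ ((⊤ : ℕ∞) : WithTop ℕ∞) (deriv f) := (contDiff_infty_iff_deriv.mp hfi).2
  have hd2 : Differentiable ℝ (deriv f) := (contDiff_infty_iff_deriv.mp hf').1
  have hfun : (fun q : Pt n => ΓE f q k i j) = fun q : Pt n => Γc f q.1 k i j := by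
    funext q; exact ΓE_eq hd1 q k i j
  rw [hfun]
  unfold Γc Γc'
  by_cases hA : (k:ℕ) = 1 ∧ (i:ℕ) = (j:ℕ) ∧ 2 ≤ (i:ℕ)
  · simp only [if_pos hA]
    have hder : HasDerivAt (fun u => -(deriv f u)/2) (-(deriv (deriv f) p.1)/2) p.1 :=
      ((hd2 p.1).hasDerivAt.neg.div_const 2)
    rw [pd_fst hder.differentiableAt]
    rw [hder.deriv]
  · simp only [if_neg hA]
    by_cases hB : (((i:ℕ) = (k:ℕ) ∧ (j:ℕ) = 0) ∨ ((j:ℕ) = (k:ℕ) ∧ (i:ℕ) = 0)) ∧ 2 ≤ (k:ℕ)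
    · simp only [if_pos hB]
      have hne : 2 * f p.1 ≠ 0 := by have := hpos p.1; positivity
      have hder : HasDerivAt (fun u => deriv f u / (2 * f u))
          ((deriv (deriv f) p.1 * (2 * f p.1) - deriv f p.1 * (2 * deriv f p.1))
            / (2 * f p.1)^2) p.1 :=
        (hd2 p.1).hasDerivAt.div ((hd1 p.1).hasDerivAt.const_mul 2) hne
      rw [pd_fst hder.differentiableAt, hder.deriv]
      have hne' : f p.1 ≠ 0 := (hpos p.1).ne'
      split_ifs with h1
      · field_simp
      · rfl
    · simp only [if_neg hB]
      rw [pd_const]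
      split_ifs <;> rfl


set_option maxHeartbeats 2000000 in
lemma sumΓΓ {f : ℝ → ℝ} (hf : Differentiable ℝ f) (p : Pt n) (k i j : Fin (n+2)) :
    ∑ m, (ΓE f p k i m * ΓE f p m k j - ΓE f p k k m * ΓE f p m i j)
      = if 2 ≤ (k:ℕ) ∧ (i:ℕ) = 0 ∧ (j:ℕ) = 0 then (deriv f p.1 / (2 * f p.1))^2 else 0 := by
  have key : ∀ m : Fin (n+2),
      ΓE f p k i m * ΓE f p m k j - ΓE f p k k m * ΓE f p m i j
        = if (m:ℕ) = (k:ℕ) ∧ (2 ≤ (k:ℕ) ∧ (i:ℕ) = 0 ∧ (j:ℕ) = 0)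
            then (deriv f p.1 / (2 * f p.1))^2 else 0 := by
    intro m
    simp only [ΓE_eq hf, Γc]
    split_ifs <;> first | omega | ring
  rw [Finset.sum_congr rfl (fun m _ => key m), sum_ite_val]

lemma sum_ite_ge2 (c : ℝ) (P : Prop) [Decidable P] :
    ∑ k : Fin (n+2), (if 2 ≤ (k:ℕ) ∧ P then c else 0) = if P then (n:ℝ) * c else 0 := by
  by_cases hP : P
  · simp only [hP, and_true, if_pos]
    rw [sum_split]
    have h0 : ¬(2 ≤ ((0 : Fin (n+2)):ℕ)) := by simp
    have h1 : ¬(2 ≤ ((1 : Fin (n+2)):ℕ)) := by simp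
    rw [if_neg h0, if_neg h1]
    have hb : ∀ b : Fin n, (if 2 ≤ ((b.succ.succ : Fin (n+2)):ℕ) then c else 0) = c :=
      fun b => if_pos (by rw [val_ss]; omega)
    rw [Finset.sum_congr rfl (fun b _ => hb b)]
    simp [Finset.sum_const, Finset.card_univ, nsmul_eq_mul]
  · simp [hP]

lemma RicE_eq {f : ℝ → ℝ} (hf : ContDiff ℝ (⊤ : ℕ∞) f) (hpos : ∀ u, 0 < f u)
    (p : Pt n) (i j : Fin (n+2)) :
    RicE f p i j = if (i:ℕ) = 0 ∧ (j:ℕ) = 0 then RicuuE n f p.1 else 0 := by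
  have hfi : ContDiff ℝ ((⊤ : ℕ∞) : WithTop ℕ∞) f := hf.of_le (by simp)
  have hd1 : Differentiable ℝ f := (contDiff_infty_iff_deriv.mp hfi).1
  unfold RicE RE
  simp only [pd_ΓE hf hpos, sumΓΓ hd1]
  have key : ∀ k : Fin (n+2),
      -((if (i:ℕ) = 0 then Γc' f p.1 k k j else 0)
        - (if (k:ℕ) = 0 then Γc' f p.1 k i j else 0)
        + if 2 ≤ (k:ℕ) ∧ (i:ℕ) = 0 ∧ (j:ℕ) = 0 then (deriv f p.1 / (2 * f p.1))^2 else 0)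
      = if 2 ≤ (k:ℕ) ∧ ((i:ℕ) = 0 ∧ (j:ℕ) = 0) then
          -(deriv (deriv f) p.1 / (2 * f p.1) - (deriv f p.1)^2 / (2 * f p.1 ^ 2)
            + (deriv f p.1 / (2 * f p.1))^2) else 0 := by
    intro k
    unfold Γc'
    split_ifs <;> first | omega | ring
  rw [Finset.sum_congr rfl (fun k _ => key k), sum_ite_ge2]
  have hne : f p.1 ≠ 0 := (hpos p.1).ne'
  split_ifs with h
  · unfold RicuuE
    field_simp
    ring
  · rfl


lemma gE_val {f : ℝ → ℝ} (p : Pt n) (k l : Fin (n+2)) :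
    gE f p k l = if ((k:ℕ) = 0 ∧ (l:ℕ) = 1) ∨ ((k:ℕ) = 1 ∧ (l:ℕ) = 0) then 1
      else if (k:ℕ) = (l:ℕ) ∧ 2 ≤ (k:ℕ) then f p.1 else 0 := by
  rw [gE]
  simp only [Fin.ext_iff]

lemma pd_X1 {F : ℝ → ℝ} (hFd : Differentiable ℝ F) (lam : ℝ) (i : Fin (n+2)) (p : Pt n) :
    pd i (fun q : Pt n => -(F q.1) / 2 + lam * q.2.1) p
      = (if (i:ℕ) = 0 then -(deriv F p.1)/2 else 0) + (if (i:ℕ) = 1 then lam else 0) := by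
  have h1 : HasDerivAt (fun u => -(F u)/2) (-(deriv F p.1)/2) p.1 :=
    ((hFd p.1).hasDerivAt.neg.div_const 2)
  have h1' : HasFDerivAt (fun q : Pt n => -(F q.1)/2)
      ((-(deriv F p.1)/2) • ContinuousLinearMap.fst ℝ ℝ (ℝ × (Fin n → ℝ))) p :=
    h1.comp_hasFDerivAt p hasFDerivAt_fst
  have h2 : HasFDerivAt (fun q : Pt n => lam * q.2.1)
      (lam • ((ContinuousLinearMap.fst ℝ ℝ (Fin n → ℝ)).comp
        (ContinuousLinearMap.snd ℝ ℝ (ℝ × (Fin n → ℝ))))) p :=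
    (ContinuousLinearMap.hasFDerivAt ((ContinuousLinearMap.fst ℝ ℝ (Fin n → ℝ)).comp
        (ContinuousLinearMap.snd ℝ ℝ (ℝ × (Fin n → ℝ))))).const_mul lam
  rw [pd_hasFDerivAt (F := fun q : Pt n => -(F q.1) / 2 + lam * q.2.1) (h1'.add h2) i]
  simp [cdir_fst, cdir_snd_fst]

lemma pd_cx (c : ℝ) (k l : Fin (n+2)) (hl : 2 ≤ (l:ℕ)) (p : Pt n) :
    pd k (fun q : Pt n => c * xc q l) p = if (k:ℕ) = (l:ℕ) then c else 0 := by
  have hlt : (l : ℕ) - 2 < n := by have := l.isLt; omega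
  have he : (fun q : Pt n => c * xc q l) = fun q : Pt n => c * q.2.2 ⟨(l : ℕ) - 2, hlt⟩ := by
    funext q; rw [xc, dif_pos hl]
  rw [he]
  have hM : HasFDerivAt (fun q : Pt n => q.2.2 ⟨(l : ℕ) - 2, hlt⟩)
      ((ContinuousLinearMap.proj (⟨(l : ℕ) - 2, hlt⟩ : Fin n)).comp
        ((ContinuousLinearMap.snd ℝ ℝ (Fin n → ℝ)).comp
          (ContinuousLinearMap.snd ℝ ℝ (ℝ × (Fin n → ℝ))))) p :=
    ContinuousLinearMap.hasFDerivAt ((ContinuousLinearMap.proj (⟨(l : ℕ) - 2, hlt⟩ : Fin n)).comp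
        ((ContinuousLinearMap.snd ℝ ℝ (Fin n → ℝ)).comp
          (ContinuousLinearMap.snd ℝ ℝ (ℝ × (Fin n → ℝ)))))
  rw [pd_hasFDerivAt (hM.const_mul c) k]
  simp [cdir_snd_snd]
  split_ifs <;> first | omega | ring

lemma sum_ss (c : ℝ) (i j : Fin (n+2)) :
    ∑ b : Fin n, (if (i:ℕ) = (b:ℕ)+2 ∧ (j:ℕ) = (b:ℕ)+2 then c else 0)
      = if (i:ℕ) = (j:ℕ) ∧ 2 ≤ (i:ℕ) then c else 0 := by
  by_cases h : (i:ℕ) = (j:ℕ) ∧ 2 ≤ (i:ℕ)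
  · rw [if_pos h]
    have hb : (i:ℕ) - 2 < n := by have := i.isLt; omega
    rw [Finset.sum_eq_single (⟨(i:ℕ)-2, hb⟩ : Fin n)]
    · rw [if_pos ⟨by simp; omega, by simp; omega⟩]
    · intro b _ hbne
      rw [if_neg]
      rintro ⟨h1, h2⟩
      exact hbne (Fin.ext (by simp; omega))
    · intro hmem
      exact absurd (Finset.mem_univ _) hmem
  · rw [if_neg h]
    exact Finset.sum_eq_zero fun b _ => if_neg (by omega)

set_option maxHeartbeats 4000000 in
lemma lie_term {f F : ℝ → ℝ} (hf : ContDiff ℝ (⊤ : ℕ∞) f) (hpos : ∀ u, 0 < f u) (lam : ℝ)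
    (hFd : Differentiable ℝ F) (hF : ∀ u, deriv F u = RicuuE n f u)
    (p : Pt n) (i j k : Fin (n+2)) :
    (if (k : ℕ) = 1 then -(F p.1) / 2 + lam * p.2.1
        else if 2 ≤ (k : ℕ) then lam / 2 * xc p k else 0)
        * pd k (fun q => gE f q i j) p
      + gE f p k j * pd i (fun q =>
          if (k : ℕ) = 1 then -(F q.1) / 2 + lam * q.2.1
          else if 2 ≤ (k : ℕ) then lam / 2 * xc q k else 0) p
      + gE f p i k * pd j (fun q =>
          if (k : ℕ) = 1 then -(F q.1) / 2 + lam * q.2.1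
          else if 2 ≤ (k : ℕ) then lam / 2 * xc q k else 0) p
    = if (k:ℕ) = 1 then
        (if (j:ℕ) = 0 then
          (if (i:ℕ) = 0 then -(RicuuE n f p.1)/2 else 0)
            + (if (i:ℕ) = 1 then lam else 0) else 0)
        + (if (i:ℕ) = 0 then
          (if (j:ℕ) = 0 then -(RicuuE n f p.1)/2 else 0)
            + (if (j:ℕ) = 1 then lam else 0) else 0)
      else if (i:ℕ) = (k:ℕ) ∧ (j:ℕ) = (k:ℕ) ∧ 2 ≤ (k:ℕ) then lam * f p.1 else 0 := by
  have hd1 : Differentiable ℝ f := hf.differentiable (by simp)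
  by_cases hk1 : (k:ℕ) = 1
  · simp only [if_pos hk1]
    rw [pd_X1 hFd, pd_X1 hFd, pd_gE hd1, gE_val, gE_val, hF p.1]
    split_ifs <;> first | omega | ring
  · by_cases hk2 : 2 ≤ (k:ℕ)
    · simp only [if_neg hk1, if_pos hk2]
      rw [pd_cx (lam/2) i k hk2, pd_cx (lam/2) j k hk2, pd_gE hd1, gE_val, gE_val]
      split_ifs <;> first | omega | ring
    · simp only [if_neg hk1, if_neg hk2]
      rw [pd_const, pd_const, pd_gE hd1]
      split_ifs <;> first | omega | ring

end Eg

open Eg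

set_option maxHeartbeats 2000000 in
/-- for any `λ ∈ ℝ`, the vector field
`X = (-(1/2) ∫ Ric_uu du + λ v) ∂_v + Σᵢ (λ/2) xᵢ ∂ᵢ` satisfies the Ricci soliton
equation `L_X g_f + Ric = λ g_f`; hence every Egorov space is an expanding, steady and
shrinking Ricci soliton. -/
theorem egorov_soliton {n : ℕ} (f : ℝ → ℝ) (hf : ContDiff ℝ (⊤ : ℕ∞) f)
    (hpos : ∀ u, 0 < f u) (lam : ℝ) (F : ℝ → ℝ)
    (hF : ∀ u, deriv F u = RicuuE n f u) (hFsm : ContDiff ℝ (⊤ : ℕ∞) F) :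
    ∀ (p : Pt n) (i j : Fin (n + 2)),
      lieE f (fun q k =>
          if (k : ℕ) = 1 then -(F q.1) / 2 + lam * q.2.1
          else if 2 ≤ (k : ℕ) then lam / 2 * xc q k
          else 0) p i j
        + RicE f p i j = lam * gE f p i j := by
  intro p i j
  have hFd : Differentiable ℝ F := hFsm.differentiable (by simp)
  have h1 : lieE f (fun q k =>
        if (k : ℕ) = 1 then -(F q.1) / 2 + lam * q.2.1
        else if 2 ≤ (k : ℕ) then lam / 2 * xc q k
        else 0) p i j
      = ∑ k : Fin (n+2),
        (if (k:ℕ) = 1 then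
          (if (j:ℕ) = 0 then
            (if (i:ℕ) = 0 then -(RicuuE n f p.1)/2 else 0)
              + (if (i:ℕ) = 1 then lam else 0) else 0)
          + (if (i:ℕ) = 0 then
            (if (j:ℕ) = 0 then -(RicuuE n f p.1)/2 else 0)
              + (if (j:ℕ) = 1 then lam else 0) else 0)
        else if (i:ℕ) = (k:ℕ) ∧ (j:ℕ) = (k:ℕ) ∧ 2 ≤ (k:ℕ) then lam * f p.1 else 0) :=
    Finset.sum_congr rfl (fun k _ => lie_term hf hpos lam hFd hF p i j k)
  rw [h1, sum_split]
  have hb : ∀ b : Fin n,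
      (if ((b.succ.succ : Fin (n+2)):ℕ) = 1 then
          (if (j:ℕ) = 0 then
            (if (i:ℕ) = 0 then -(RicuuE n f p.1)/2 else 0)
              + (if (i:ℕ) = 1 then lam else 0) else 0)
          + (if (i:ℕ) = 0 then
            (if (j:ℕ) = 0 then -(RicuuE n f p.1)/2 else 0)
              + (if (j:ℕ) = 1 then lam else 0) else 0)
        else if (i:ℕ) = ((b.succ.succ : Fin (n+2)):ℕ) ∧ (j:ℕ) = ((b.succ.succ : Fin (n+2)):ℕ)
            ∧ 2 ≤ ((b.succ.succ : Fin (n+2)):ℕ) then lam * f p.1 else 0)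
      = if (i:ℕ) = (b:ℕ)+2 ∧ (j:ℕ) = (b:ℕ)+2 then lam * f p.1 else 0 := by
    intro b
    simp only [val_ss]
    split_ifs <;> first | omega | rfl
  rw [Finset.sum_congr rfl (fun b _ => hb b), sum_ss, RicE_eq hf hpos, gE_val]
  simp only [Fin.val_zero, Fin.val_one]
  norm_num
  split_ifs <;> first | omega | ring1 | (simp only [Fin.ext_iff, Fin.val_zero] at *; omega)
end
end
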